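/- Every separable state of a two-qubit system can be obtained from the product of maximal imaginary states by real operations: if ρ = Σᵢ pᵢ σᵢ ⊗ τᵢ, where pᵢ ≥ 0, Σᵢ pᵢ = 1, and each σᵢ, τᵢ is a 2×2 density matrix, then there exist, for each i, finite families of 2×2 complex matrices {Kₘ^{(i)}}ₘ and {Lₙ^{(i)}}ₙ with all real entries satisfying Σₘ (Kₘ^{(i)})†Kₘ^{(i)} = I and Σₙ (Lₙ^{(i)})†Lₙ^{(i)} = I, such that ρ = Σᵢ pᵢ Σₘ,ₙ (Kₘ^{(i)} ⊗ Lₙ^{(i)}) (M₊ ⊗ M₊) (Kₘ^{(i)} ⊗ Lₙ^{(i)})†, where M₊ = (1/2)[[1, −i],[i, 1]]. -/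

import Mathlib

open Matrix Kronecker BigOperators
open scoped ComplexOrder

noncomputable section

/-- A density matrix: positive semidefinite with trace 1. -/
def IsDensityMatrix {n : Type*} [Fintype n] [DecidableEq n] (ρ : Matrix n n ℂ) : Prop :=
  ρ.PosSemidef ∧ ρ.trace = 1

/-- The l₁-norm imaginarity measure: sum of |Im ρᵢⱼ| over off-diagonal entries. -/
noncomputable def Fl1 {n : Type*} [Fintype n] [DecidableEq n] (ρ : Matrix n n ℂ) : ℝ :=
  ∑ i, ∑ j, if i = j then 0 else |(ρ i j).im|

/-- The trace norm ‖M‖₁ = Tr √(M†M). -/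
noncomputable def traceNorm {n : Type*} [Fintype n] [DecidableEq n] (M : Matrix n n ℂ) : ℝ :=
  (((Matrix.posSemidef_conjTranspose_mul_self M).1.eigenvectorUnitary.1 *
    diagonal (((↑) : ℝ → ℂ) ∘ Real.sqrt ∘ (Matrix.posSemidef_conjTranspose_mul_self M).1.eigenvalues) *
    (star (Matrix.posSemidef_conjTranspose_mul_self M).1.eigenvectorUnitary : Matrix n n ℂ)).trace).re

/-- The robustness of imaginarity: (1/2)‖ρ − ρᵀ‖₁. -/
noncomputable def FR {n : Type*} [Fintype n] [DecidableEq n] (ρ : Matrix n n ℂ) : ℝ :=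
  traceNorm (ρ - ρᵀ) / 2

/-- Von Neumann entropy (base-2), via eigenvalues of a Hermitian matrix
(junk value 0 if not Hermitian). -/
noncomputable def vnEntropy {n : Type*} [Fintype n] [DecidableEq n] (σ : Matrix n n ℂ) : ℝ :=
  if h : σ.IsHermitian then -∑ j, (h.eigenvalues j) * Real.logb 2 (h.eigenvalues j) else 0

/-- The relative entropy of imaginarity: S(Re ρ) − S(ρ), Re ρ = (ρ + ρᵀ)/2. -/
noncomputable def Fr {n : Type*} [Fintype n] [DecidableEq n] (ρ : Matrix n n ℂ) : ℝ :=
  vnEntropy ((1/2 : ℂ) • (ρ + ρᵀ)) - vnEntropy ρ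

/-- The canonical single-qubit state ρ_A. -/
noncomputable def rhoA (A : ℝ) : Matrix (Fin 2) (Fin 2) ℂ :=
  !![(((1 + A) / 2 : ℝ) : ℂ), -(Complex.I / 2) * (Real.sqrt (1 - A ^ 2) : ℂ);
     (Complex.I / 2) * (Real.sqrt (1 - A ^ 2) : ℂ), (((1 - A) / 2 : ℝ) : ℂ)]

/-- Density matrix of the maximal imaginary state |+⟩ = (|0⟩ + i|1⟩)/√2. -/
noncomputable def Mplus : Matrix (Fin 2) (Fin 2) ℂ :=
  (1/2 : ℂ) • !![1, -Complex.I; Complex.I, 1]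

/-!
Write `σ = ∑ⱼ wⱼ wⱼ†`. The real matrix `R(w)` with rows `(Re w_a, Im w_a)` sends `(1, i)` to `w`,
so `R(w) M₊ R(w)† = ½ w w†`. Pairing `R(w)` with `R(i w)` doubles this to `w w†` while
`R(w)†R(w) + R(iw)†R(iw) = ‖w‖² I`; since `∑ⱼ ‖wⱼ‖² = Tr σ = 1`, the operators `R(wⱼ), R(i wⱼ)`
form a real channel taking `M₊` to `σ`. Tensoring the channels for `σᵢ` and `τᵢ` gives
`σᵢ ⊗ τᵢ`.
-/

open Complex

theorem sum_sum_kronecker_mul_kronecker_mul_conjTranspose {R ι κ l m n p : Type*}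
    [CommSemiring R] [StarRing R] [Fintype ι] [Fintype κ] [Fintype m] [Fintype p]
    (K : ι → Matrix l m R) (L : κ → Matrix n p R) (ρ : Matrix m m R) (ρ' : Matrix p p R) :
    ∑ i, ∑ j, (K i ⊗ₖ L j) * (ρ ⊗ₖ ρ') * (K i ⊗ₖ L j)ᴴ
      = (∑ i, K i * ρ * (K i)ᴴ) ⊗ₖ ∑ j, L j * ρ' * (L j)ᴴ := by
  simp_rw [conjTranspose_kronecker, ← mul_kronecker_mul]
  ext ⟨a, b⟩ ⟨c, d⟩
  simp only [Matrix.sum_apply, kronecker_apply, Finset.sum_mul_sum]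

lemma Mplus_eq_vecMulVec : Mplus = (1 / 2 : ℂ) • vecMulVec ![1, I] (star ![1, I]) := by
  ext a b
  fin_cases a <;> fin_cases b <;> simp [Mplus, vecMulVec]

def realLift {n : Type*} (w : n → ℂ) : Matrix n (Fin 2) ℂ :=
  of fun a => ![((w a).re : ℂ), ((w a).im : ℂ)]

section realLift

variable {n : Type*} (w : n → ℂ)

lemma realLift_im (a : n) (b : Fin 2) : (realLift w a b).im = 0 := by
  fin_cases b <;> simp [realLift]

lemma realLift_mulVec : realLift w *ᵥ ![1, I] = w := by
  ext a
  simp [realLift, mulVec, dotProduct]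

lemma realLift_mul_Mplus_mul_conjTranspose :
    realLift w * Mplus * (realLift w)ᴴ = (1 / 2 : ℂ) • vecMulVec w (star w) := by
  rw [Mplus_eq_vecMulVec, Matrix.mul_smul, Matrix.smul_mul, mul_vecMulVec, vecMulVec_mul,
    ← star_mulVec, realLift_mulVec]

lemma realLift_pair_mul_Mplus_mul_conjTranspose :
    realLift w * Mplus * (realLift w)ᴴ + realLift (I • w) * Mplus * (realLift (I • w))ᴴ
      = vecMulVec w (star w) := by
  have hI : vecMulVec (I • w) (star (I • w)) = vecMulVec w (star w) := by
    rw [star_smul, smul_vecMulVec, vecMulVec_smul, smul_smul, show I * star I = 1 by simp,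
      one_smul]
  rw [realLift_mul_Mplus_mul_conjTranspose, realLift_mul_Mplus_mul_conjTranspose, hI, ← add_smul]
  norm_num

lemma realLift_pair_conjTranspose_mul [Fintype n] [DecidableEq n] :
    (realLift w)ᴴ * realLift w + (realLift (I • w))ᴴ * realLift (I • w)
      = ((∑ a, normSq (w a) : ℝ) : ℂ) • 1 := by
  ext b c
  fin_cases b <;> fin_cases c <;>
    simp [realLift, mul_apply, normSq_apply, ← Finset.sum_add_distrib, mul_comm, add_comm]

end realLift

theorem IsDensityMatrix.exists_real_kraus_map_Mplus_eq {n : Type*} [Fintype n] [DecidableEq n]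
    {σ : Matrix n n ℂ} (hσ : IsDensityMatrix σ) :
    ∃ (N : ℕ) (K : Fin N → Matrix n (Fin 2) ℂ), (∀ m a b, (K m a b).im = 0) ∧
      ∑ m, (K m)ᴴ * K m = 1 ∧ ∑ m, K m * Mplus * (K m)ᴴ = σ := by
  obtain ⟨r, v, rfl⟩ := posSemidef_iff_eq_sum_vecMulVec.mp hσ.1
  have htrace : ∑ j, ∑ a, normSq (v j a) = 1 := by
    have h := hσ.2
    simp only [trace_sum, trace_vecMulVec, dotProduct, Pi.star_apply, RCLike.star_def,
      mul_conj] at h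
    exact_mod_cast h
  let K (k : Fin r × Fin 2) : Matrix n (Fin 2) ℂ := realLift (![1, I] k.2 • v k.1)
  refine ⟨r * 2, fun k => K (finProdFinEquiv.symm k), fun k => realLift_im _, ?_, ?_⟩
  · rw [finProdFinEquiv.symm.sum_comp fun k => (K k)ᴴ * K k, Fintype.sum_prod_type]
    simp only [K, Fin.sum_univ_two, Matrix.cons_val_zero, Matrix.cons_val_one, one_smul,
      realLift_pair_conjTranspose_mul, ← Finset.sum_smul, ← ofReal_sum, htrace, ofReal_one,
      one_smul]
  · rw [finProdFinEquiv.symm.sum_comp fun k => K k * Mplus * (K k)ᴴ, Fintype.sum_prod_type]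
    simp only [K, Fin.sum_univ_two, Matrix.cons_val_zero, Matrix.cons_val_one, one_smul,
      realLift_pair_mul_Mplus_mul_conjTranspose]

theorem separable_from_maximal_imaginary_general (s : ℕ) (p : Fin s → ℝ)
    (σ τ : Fin s → Matrix (Fin 2) (Fin 2) ℂ)
    (hσ : ∀ i, IsDensityMatrix (σ i)) (hτ : ∀ i, IsDensityMatrix (τ i)) :
    ∃ (NK NL : Fin s → ℕ)
      (K : ∀ i, Fin (NK i) → Matrix (Fin 2) (Fin 2) ℂ)
      (L : ∀ i, Fin (NL i) → Matrix (Fin 2) (Fin 2) ℂ),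
      (∀ i m a b, (K i m a b).im = 0) ∧
      (∀ i n a b, (L i n a b).im = 0) ∧
      (∀ i, (∑ m, (K i m)ᴴ * K i m) = 1) ∧
      (∀ i, (∑ n, (L i n)ᴴ * L i n) = 1) ∧
      (∑ i, (p i : ℂ) • (σ i ⊗ₖ τ i))
        = ∑ i, (p i : ℂ) •
            ∑ m, ∑ n, (K i m ⊗ₖ L i n) * (Mplus ⊗ₖ Mplus) * (K i m ⊗ₖ L i n)ᴴ := by
  choose NK K hK_real hK_trace hK_σ using fun i => (hσ i).exists_real_kraus_map_Mplus_eq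
  choose NL L hL_real hL_trace hL_τ using fun i => (hτ i).exists_real_kraus_map_Mplus_eq
  refine ⟨NK, NL, K, L, hK_real, hL_real, hK_trace, hL_trace, ?_⟩
  simp_rw [sum_sum_kronecker_mul_kronecker_mul_conjTranspose, hK_σ, hL_τ]

/-- every separable two-qubit state is obtained from M₊ ⊗ M₊ by
(mixtures of) tensor products of real operations. -/
theorem separable_from_maximal_imaginary (s : ℕ) (p : Fin s → ℝ)
    (σ τ : Fin s → Matrix (Fin 2) (Fin 2) ℂ)
    (hp : ∀ i, 0 ≤ p i) (hpsum : (∑ i, p i) = 1)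
    (hσ : ∀ i, IsDensityMatrix (σ i)) (hτ : ∀ i, IsDensityMatrix (τ i)) :
    ∃ (NK NL : Fin s → ℕ)
      (K : ∀ i, Fin (NK i) → Matrix (Fin 2) (Fin 2) ℂ)
      (L : ∀ i, Fin (NL i) → Matrix (Fin 2) (Fin 2) ℂ),
      (∀ i m a b, (K i m a b).im = 0) ∧
      (∀ i n a b, (L i n a b).im = 0) ∧
      (∀ i, (∑ m, (K i m)ᴴ * K i m) = 1) ∧
      (∀ i, (∑ n, (L i n)ᴴ * L i n) = 1) ∧
      (∑ i, (p i : ℂ) • (σ i ⊗ₖ τ i))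
        = ∑ i, (p i : ℂ) •
            ∑ m, ∑ n, (K i m ⊗ₖ L i n) * (Mplus ⊗ₖ Mplus) * (K i m ⊗ₖ L i n)ᴴ :=
  separable_from_maximal_imaginary_general s p σ τ hσ hτ
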